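/- arXiv:1204.4564 — 3 statements merged into one kernel-verified Lean document; each statement's English description precedes it below -/
import Mathlib

section
/- Let p be a prime with p ≡ 1 (mod 4) and let Pal_p be the Paley graph on F_p. For any nonempty subset S ⊆ F_p, the absolute value of the character sum ∑_{i ∈ F_p} χ(∏_{j ∈ S} (i − j)) equals | |S ∪ Odd(S)| − |S ∪ Even(S)| |, where χ is the Legendre symbol mod p, Odd and Even neighborhoods are taken in Pal_p. -/
/-- Odd neighborhood. -/
def oddNbhd {V : Type*} (G : SimpleGraph V) (S : Set V) : Set V :=
  {v | Odd ((G.neighborSet v ∩ S).ncard)}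

/-- Even neighborhood. -/
def evenNbhd {V : Type*} (G : SimpleGraph V) (S : Set V) : Set V :=
  {v | Even ((G.neighborSet v ∩ S).ncard)}

/-- The Paley graph on `ZMod p`: `i ~ j` iff `i ≠ j` and `i - j` is a square
(stated symmetrically; for `p ≡ 1 [MOD 4]` the two conditions coincide). -/
def paley (p : ℕ) [Fact p.Prime] : SimpleGraph (ZMod p) where
  Adj i j := i ≠ j ∧ IsSquare (i - j) ∧ IsSquare (j - i)
  symm := ⟨fun i j ⟨h, a, b⟩ => ⟨h.symm, b, a⟩⟩
  loopless := ⟨fun i ⟨h, _⟩ => h rfl⟩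

/-! For `v ∉ S` every factor `v - j` is nonzero, and since `-1` is a square when
`p ≡ 1 (mod 4)`, `χ (v - j)` is `1` or `-1` according as `v` is or is not adjacent to `j` in
the Paley graph. Hence `χ (∏ j ∈ S, (v - j)) = (-1) ^ |S| * (-1) ^ d(v)` with
`d(v) = |N(v) ∩ S|`, while the product vanishes for `v ∈ S`, so the character sum is
`± ∑_{v ∉ S} (-1) ^ d(v)`. On the graph side, `S` lies in both unions and a vertex `v ∉ S`
lies in exactly one of them, in the first iff `(-1) ^ d(v) = -1`; so the difference of
cardinalities is `-∑_{v ∉ S} (-1) ^ d(v)` as well. -/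

open Finset

lemma prod_ite_one_neg_one {ι R : Type*} [CommRing R] (s : Finset ι) (P : ι → Prop)
    [DecidablePred P] :
    ∏ j ∈ s, (if P j then (1 : R) else -1) = (-1) ^ #s * (-1) ^ #{j ∈ s | P j} := by
  rw [prod_ite, prod_const_one, one_mul, prod_const, ← card_filter_add_card_filter_not (s := s) P,
    pow_add, mul_right_comm, ← pow_add, Even.neg_one_pow ⟨_, rfl⟩, one_mul]

namespace SimpleGraph

variable {V : Type*} (G : SimpleGraph V) [DecidableRel G.Adj]

lemma ncard_neighborSet_inter (S : Finset V) (v : V) :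
    (G.neighborSet v ∩ ↑S).ncard = #{j ∈ S | G.Adj v j} := by
  rw [← Set.ncard_coe_finset]
  congr 1
  ext j
  simp [and_comm]

variable [Fintype V] [DecidableEq V]

lemma union_oddNbhd_eq (S : Finset V) :
    ↑S ∪ oddNbhd G ↑S = ↑({v | v ∈ S ∨ Odd #{j ∈ S | G.Adj v j}} : Finset V) := by
  ext v
  simp [oddNbhd, ncard_neighborSet_inter]

lemma union_evenNbhd_eq (S : Finset V) :
    ↑S ∪ evenNbhd G ↑S = ↑({v | v ∈ S ∨ Even #{j ∈ S | G.Adj v j}} : Finset V) := by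
  ext v
  simp [evenNbhd, ncard_neighborSet_inter]

lemma ncard_union_oddNbhd_sub_ncard_union_evenNbhd (S : Finset V) :
    (((↑S : Set V) ∪ oddNbhd G ↑S).ncard : ℤ) - ((↑S : Set V) ∪ evenNbhd G ↑S).ncard =
      -∑ v ∈ Sᶜ, (-1) ^ #{j ∈ S | G.Adj v j} := by
  rw [union_oddNbhd_eq, union_evenNbhd_eq, Set.ncard_coe_finset, Set.ncard_coe_finset,
    natCast_card_filter, natCast_card_filter, ← sum_sub_distrib, ← sum_compl_add_sum S,
    sum_eq_zero (s := S) (fun v hv => by simp [hv]), add_zero, ← sum_neg_distrib]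
  refine sum_congr rfl fun v hv => ?_
  rw [mem_compl] at hv
  rcases Nat.even_or_odd #{j ∈ S | G.Adj v j} with h | h
  · simp [hv, h, h.neg_one_pow, Nat.not_odd_iff_even.mpr h]
  · simp [hv, h, h.neg_one_pow, Nat.not_even_iff_odd.mpr h]

end SimpleGraph

section Paley

variable {p : ℕ} [Fact p.Prime]

instance : DecidableRel (paley p).Adj := fun i j =>
  inferInstanceAs (Decidable (i ≠ j ∧ IsSquare (i - j) ∧ IsSquare (j - i)))

lemma paley_adj_iff (hp4 : p % 4 = 1) {i j : ZMod p} :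
    (paley p).Adj i j ↔ i ≠ j ∧ IsSquare (i - j) := by
  have hneg : IsSquare (-1 : ZMod p) := ZMod.exists_sq_eq_neg_one_iff.mpr (by omega)
  refine ⟨fun h => ⟨h.1, h.2.1⟩, fun ⟨hne, hsq⟩ => ⟨hne, hsq, ?_⟩⟩
  rw [← neg_sub, neg_eq_neg_one_mul]
  exact hneg.mul hsq

lemma quadraticChar_sub_eq_ite_paley_adj (hp4 : p % 4 = 1) {i j : ZMod p} (hij : i ≠ j) :
    quadraticChar (ZMod p) (i - j) = if (paley p).Adj i j then 1 else -1 := by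
  have hsub : i - j ≠ 0 := sub_ne_zero.mpr hij
  split_ifs with h
  · exact (quadraticChar_one_iff_isSquare hsub).mpr ((paley_adj_iff hp4).mp h).2
  · exact quadraticChar_neg_one_iff_not_isSquare.mpr fun hsq =>
      h ((paley_adj_iff hp4).mpr ⟨hij, hsq⟩)

lemma quadraticChar_prod_sub_of_notMem (hp4 : p % 4 = 1) {S : Finset (ZMod p)} {v : ZMod p}
    (hv : v ∉ S) :
    quadraticChar (ZMod p) (∏ j ∈ S, (v - j)) =
      (-1) ^ #S * (-1) ^ #{j ∈ S | (paley p).Adj v j} := by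
  rw [map_prod, ← prod_ite_one_neg_one]
  exact prod_congr rfl fun j hj =>
    quadraticChar_sub_eq_ite_paley_adj hp4 (ne_of_mem_of_not_mem hj hv).symm

lemma sum_quadraticChar_prod_sub (hp4 : p % 4 = 1) (S : Finset (ZMod p)) :
    ∑ i : ZMod p, quadraticChar (ZMod p) (∏ j ∈ S, (i - j)) =
      (-1) ^ #S * ∑ v ∈ Sᶜ, (-1) ^ #{j ∈ S | (paley p).Adj v j} := by
  rw [← sum_compl_add_sum S, sum_eq_zero (s := S) fun v hv => ?_, add_zero, mul_sum]
  · exact sum_congr rfl fun v hv => quadraticChar_prod_sub_of_notMem hp4 (mem_compl.mp hv)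
  · rw [prod_eq_zero hv (sub_self v), quadraticChar_zero]

end Paley

theorem charSum_eq_odd_even_diff_general (p : ℕ) [Fact p.Prime] (hp4 : p % 4 = 1)
    (S : Finset (ZMod p)) :
    |∑ i : ZMod p, quadraticChar (ZMod p) (∏ j ∈ S, (i - j))| =
      |(((↑S : Set (ZMod p)) ∪ oddNbhd (paley p) ↑S).ncard : ℤ) -
        (((↑S : Set (ZMod p)) ∪ evenNbhd (paley p) ↑S).ncard : ℤ)| := by
  rw [sum_quadraticChar_prod_sub hp4, (paley p).ncard_union_oddNbhd_sub_ncard_union_evenNbhd,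
    abs_mul, abs_neg, abs_pow, abs_neg, abs_one, one_pow, one_mul]

theorem charSum_eq_odd_even_diff (p : ℕ) [Fact p.Prime] (hp4 : p % 4 = 1)
    (S : Finset (ZMod p)) (hS : S.Nonempty) :
    |∑ i : ZMod p, quadraticChar (ZMod p) (∏ j ∈ S, (i - j))| =
      |(((↑S : Set (ZMod p)) ∪ oddNbhd (paley p) ↑S).ncard : ℤ) -
        (((↑S : Set (ZMod p)) ∪ evenNbhd (paley p) ↑S).ncard : ℤ)| :=
  charSum_eq_odd_even_diff_general p hp4 S
end

section
/- For any natural numbers n ≥ 1 and k with 0 ≤ k ≤ n, the partial binomial sum satisfies ∑_{j=0}^{k} C(n, j) ≤ 2^{n·H(k/n)} when k/n ≤ 1/2, where H is the binary entropy function H(t) = −t·log₂(t) − (1−t)·log₂(1−t) (with H(0) = H(1) = 0). -/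
/-! With `p = k / n ≤ 1/2` the weights `p ^ j * (1 - p) ^ (n - j)` decrease in `j`, so
`(∑_{j ≤ k} C(n, j)) * p ^ k * (1 - p) ^ (n - k)` is at most a partial sum of the binomial
expansion of `(p + (1 - p)) ^ n = 1`. Since `n * H(p) = -k log₂ p - (n - k) log₂ (1 - p)`,
the weight `p ^ k * (1 - p) ^ (n - k)` is exactly `2 ^ (-n H(p))`. -/

/-- Binary entropy function (base-2 logarithms); `Real.logb 2 0 = 0`
gives `binEnt 0 = binEnt 1 = 0` automatically. -/
noncomputable def binEnt (t : ℝ) : ℝ :=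
  -t * Real.logb 2 t - (1 - t) * Real.logb 2 (1 - t)

open Finset Real

lemma pow_mul_one_sub_pow_le_of_le {p : ℝ} (hp : 0 ≤ p) (hp_le : p ≤ 1 - p) {n j k : ℕ}
    (hjk : j ≤ k) (hkn : k ≤ n) :
    p ^ k * (1 - p) ^ (n - k) ≤ p ^ j * (1 - p) ^ (n - j) := by
  obtain ⟨d, rfl⟩ := Nat.exists_eq_add_of_le hjk
  calc p ^ (j + d) * (1 - p) ^ (n - (j + d)) = p ^ j * (p ^ d * (1 - p) ^ (n - (j + d))) := by
        ring
    _ ≤ p ^ j * ((1 - p) ^ d * (1 - p) ^ (n - (j + d))) := by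
        have : 0 ≤ 1 - p := hp.trans hp_le
        gcongr
    _ = p ^ j * (1 - p) ^ (n - j) := by rw [← pow_add, show d + (n - (j + d)) = n - j by omega]

lemma sum_range_choose_mul_pow_le_one {p : ℝ} (hp0 : 0 ≤ p) (hp1 : p ≤ 1) {n k : ℕ}
    (hkn : k ≤ n) :
    ∑ j ∈ range (k + 1), (n.choose j : ℝ) * (p ^ j * (1 - p) ^ (n - j)) ≤ 1 := by
  calc ∑ j ∈ range (k + 1), (n.choose j : ℝ) * (p ^ j * (1 - p) ^ (n - j))
      ≤ ∑ j ∈ range (n + 1), (n.choose j : ℝ) * (p ^ j * (1 - p) ^ (n - j)) := by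
        apply sum_le_sum_of_subset_of_nonneg (range_subset_range.mpr (by omega))
        intro j _ _
        have : 0 ≤ 1 - p := by linarith
        positivity
    _ = (p + (1 - p)) ^ n := by
        rw [add_pow]
        exact sum_congr rfl fun j _ ↦ by ring
    _ = 1 := by simp

lemma sum_range_choose_mul_pow_le_one_of_le_half {p : ℝ} (hp0 : 0 ≤ p) (hp : p ≤ 1 - p)
    {n k : ℕ} (hkn : k ≤ n) :
    (∑ j ∈ range (k + 1), (n.choose j : ℝ)) * (p ^ k * (1 - p) ^ (n - k)) ≤ 1 := by
  rw [sum_mul]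
  refine le_trans (sum_le_sum fun j hj ↦ ?_)
    (sum_range_choose_mul_pow_le_one hp0 (by linarith) hkn)
  have hjk : j ≤ k := Nat.lt_succ_iff.mp (mem_range.mp hj)
  exact mul_le_mul_of_nonneg_left (pow_mul_one_sub_pow_le_of_le hp0 hp hjk hkn) (by positivity)

lemma two_rpow_neg_mul_logb {x : ℝ} {m : ℕ} (h : 0 < x ∨ m = 0) :
    (2 : ℝ) ^ (-(m : ℝ) * logb 2 x) = (x ^ m)⁻¹ := by
  rcases h with hx | rfl
  · rw [mul_comm, rpow_mul zero_le_two, rpow_logb two_pos (by norm_num) hx, rpow_neg hx.le,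
      rpow_natCast]
  · simp

lemma two_rpow_mul_binEnt_div {n k : ℕ} (hkn : k ≤ n) :
    (2 : ℝ) ^ ((n : ℝ) * binEnt (k / n)) = (((k : ℝ) / n) ^ k * (1 - k / n) ^ (n - k))⁻¹ := by
  set p : ℝ := k / n
  have hnp : (n : ℝ) * p = k := by
    rcases (Nat.eq_zero_or_pos n) with rfl | hn
    · simp [Nat.le_zero.mp hkn]
    · exact mul_div_cancel₀ _ (by positivity)
  have hexp : (n : ℝ) * binEnt p =
      -(k : ℝ) * logb 2 p + -((n - k : ℕ) : ℝ) * logb 2 (1 - p) := by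
    rw [binEnt, Nat.cast_sub hkn]
    linear_combination (logb 2 (1 - p) - logb 2 p) * hnp
  have hp : 0 < p ∨ k = 0 := by
    rcases Nat.eq_zero_or_pos k with hk | hk
    · exact .inr hk
    · exact .inl (div_pos (by exact_mod_cast hk) (by exact_mod_cast hk.trans_le hkn))
  have hq : 0 < 1 - p ∨ n - k = 0 := by
    rcases hkn.lt_or_eq with hk | rfl
    · have hn : (0 : ℝ) < n := by exact_mod_cast (Nat.zero_le k).trans_lt hk
      exact .inl (sub_pos.mpr ((div_lt_one hn).mpr (by exact_mod_cast hk)))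
    · exact .inr (Nat.sub_self k)
  rw [hexp, rpow_add two_pos, two_rpow_neg_mul_logb hp, two_rpow_neg_mul_logb hq, mul_inv]

theorem sum_choose_le_two_rpow_entropy_general (n k : ℕ) (hk : k ≤ n)
    (hhalf : (k : ℝ) / n ≤ 1/2) :
    (∑ j ∈ Finset.range (k + 1), (n.choose j : ℝ)) ≤
      Real.rpow 2 ((n : ℝ) * binEnt ((k : ℝ) / n)) := by
  have hweight := two_rpow_mul_binEnt_div hk
  have hpos : 0 < ((k : ℝ) / n) ^ k * (1 - k / n) ^ (n - k) :=
    inv_pos.mp (hweight ▸ rpow_pos_of_pos two_pos _)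
  rw [rpow_eq_pow, hweight, ← one_div, le_div_iff₀ hpos]
  exact sum_range_choose_mul_pow_le_one_of_le_half (by positivity) (by linarith) hk

theorem sum_choose_le_two_rpow_entropy (n k : ℕ) (hn : 1 ≤ n) (hk : k ≤ n)
    (hhalf : (k : ℝ) / n ≤ 1/2) :
    (∑ j ∈ Finset.range (k + 1), (n.choose j : ℝ)) ≤
      Real.rpow 2 ((n : ℝ) * binEnt ((k : ℝ) / n)) :=
  sum_choose_le_two_rpow_entropy_general n k hk hhalf
end

section
/- For c = 0.110, the inequality H(d) + H(2c − d) − 1 ≤ 0 holds for all d ∈ (0, 2c), where H is the binary entropy function. -/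
/-!
By concavity of the binary entropy, `H d + H (2c - d) ≤ 2 H c`, and `2 H (11/100) ≤ 1`
amounts, after multiplying by `100 log 2` and exponentiating, to
`(100/11)^11 * (100/89)^89 ≤ 2^50`, a rational inequality checked by `norm_num`.
-/

open Real Set

lemma binEnt_eq_binEntropy_div_log_two (t : ℝ) : binEnt t = binEntropy t / log 2 := by
  rw [binEnt, binEntropy, logb, logb, log_inv, log_inv]
  ring

lemma binEnt_add_le_two_mul_binEnt_midpoint {a b : ℝ} (ha : a ∈ Icc 0 1) (hb : b ∈ Icc 0 1) :
    binEnt a + binEnt b ≤ 2 * binEnt ((a + b) / 2) := by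
  have hmid := strictConcave_binEntropy.concaveOn.2 ha hb
    (by norm_num : (0 : ℝ) ≤ 1 / 2) (by norm_num : (0 : ℝ) ≤ 1 / 2) (by norm_num)
  simp only [smul_eq_mul] at hmid
  rw [show 1 / 2 * a + 1 / 2 * b = (a + b) / 2 by ring] at hmid
  simp only [binEnt_eq_binEntropy_div_log_two]
  have hlog2 : 0 < log 2 := log_pos one_lt_two
  rw [← add_div, ← mul_div_assoc, div_le_div_iff_of_pos_right hlog2]
  linarith

lemma binEntropy_eleven_hundredths_le : binEntropy (11 / 100) ≤ log 2 / 2 := by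
  have hpow : log ((100 / 11) ^ 11 * (100 / 89) ^ 89 : ℝ) ≤ log (2 ^ 50) :=
    log_le_log (by positivity) (by norm_num)
  rw [log_mul (by positivity) (by positivity), log_pow, log_pow, log_pow] at hpow
  rw [binEntropy, show (1 : ℝ) - 11 / 100 = 89 / 100 by norm_num, inv_div, inv_div]
  push_cast at hpow
  linarith

lemma binEnt_eleven_hundredths_le : binEnt (11 / 100) ≤ 1 / 2 := by
  rw [binEnt_eq_binEntropy_div_log_two, div_le_iff₀ (log_pos one_lt_two)]
  linarith [binEntropy_eleven_hundredths_le]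

theorem entropy_condition_bipartite :
    ∀ d : ℝ, 0 < d → d < 2 * (11/100 : ℝ) →
      binEnt d + binEnt (2 * (11/100) - d) - 1 ≤ 0 := by
  intro d hd0 hd1
  have hconc := binEnt_add_le_two_mul_binEnt_midpoint (a := d) (b := 2 * (11 / 100) - d)
    ⟨hd0.le, by linarith⟩ ⟨by linarith, by linarith⟩
  rw [show (d + (2 * (11 / 100) - d)) / 2 = (11 / 100 : ℝ) by ring] at hconc
  linarith [binEnt_eleven_hundredths_le]
end
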